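/- Let $\Omega\subseteq\mathbb{R}^n$ be a bounded Lipschitz set and let $\psi\in C_c^\infty(\mathbb{R}^n;\mathbb{R}^n)$ satisfy $|\psi|=1$ on $\partial\Omega$ and $\psi\cdot\nu\ge\gamma>0$ $\mathcal{H}^{n-1}$-a.e. on $\partial\Omega$. Then there are $\rho>0$ and $c>0$ such that for all $x,y\in\partial\Omega$ with $|x-y|<\rho$ one has $|x-y|\le c\,|(\mathrm{Id}-\psi(y)\otimes\psi(y))(x-y)|$. -/

import Mathlib

open Metric MeasureTheory
open scoped RealInnerProductSpace

/-- The first `d` coordinates of a point of `ℝ^{d+1}`. -/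
def horizPart (d : ℕ) (y : EuclideanSpace ℝ (Fin (d+1))) : EuclideanSpace ℝ (Fin d) :=
  WithLp.toLp 2 (fun i => y i.castSucc)

/-- The point `(w, h) ∈ ℝ^{d+1}` with horizontal part `w` and height `h`. -/
def withHeight (d : ℕ) (w : EuclideanSpace ℝ (Fin d)) (h : ℝ) :
    EuclideanSpace ℝ (Fin (d+1)) :=
  WithLp.toLp 2 (Fin.snoc (WithLp.ofLp w) h)

/-- The outer unit normal `(-DG, 1)/√(1+|DG|²)` of the subgraph of `G` at a point
where `G` has derivative `dG`. -/
noncomputable def graphNormal (d : ℕ) (dG : EuclideanSpace ℝ (Fin d) →L[ℝ] ℝ) :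
    EuclideanSpace ℝ (Fin (d+1)) :=
  (Real.sqrt (1 + ‖dG‖ ^ 2))⁻¹ •
    withHeight d (WithLp.toLp 2 (fun i => -(dG (EuclideanSpace.single i 1)))) 1

/-- A Lipschitz boundary chart for `Ω` at `x`. -/
def IsLipschitzChart (d : ℕ) (Ω : Set (EuclideanSpace ℝ (Fin (d+1))))
    (x : EuclideanSpace ℝ (Fin (d+1))) (ε L : ℝ)
    (A : EuclideanSpace ℝ (Fin (d+1)) ≃ᵃⁱ[ℝ] EuclideanSpace ℝ (Fin (d+1)))
    (G : EuclideanSpace ℝ (Fin d) → ℝ) : Prop :=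
  0 < ε ∧ A 0 = x ∧ LipschitzWith (Real.toNNReal L) G ∧
    ball x ε ∩ Ω = ball x ε ∩ (A '' {y | y (Fin.last d) < G (horizPart d y)})

/-- `Ω` is a Lipschitz set. -/
def IsLipschitzSet (d : ℕ) (Ω : Set (EuclideanSpace ℝ (Fin (d+1)))) : Prop :=
  ∀ x ∈ frontier Ω, ∃ ε L A G, IsLipschitzChart d Ω x ε L A G


variable {d : ℕ}

noncomputable def gradVec (dG : EuclideanSpace ℝ (Fin d) →L[ℝ] ℝ) :
    EuclideanSpace ℝ (Fin d) :=
  WithLp.toLp 2 (fun i => dG (EuclideanSpace.single i 1))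

lemma gradVec_spec (dG : EuclideanSpace ℝ (Fin d) →L[ℝ] ℝ)
    (v : EuclideanSpace ℝ (Fin d)) : dG v = ⟪gradVec dG, v⟫ := by
  conv_lhs => rw [← (EuclideanSpace.basisFun (Fin d) ℝ).sum_repr' v]
  rw [map_sum, PiLp.inner_apply]
  refine Finset.sum_congr rfl fun i _ => ?_
  rw [_root_.map_smul]
  simp [EuclideanSpace.basisFun_apply, EuclideanSpace.inner_single_left, gradVec,
    mul_comm]

lemma gradVec_norm_le (dG : EuclideanSpace ℝ (Fin d) →L[ℝ] ℝ) :
    ‖gradVec dG‖ ≤ ‖dG‖ := by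
  have h1 : dG (gradVec dG) = ‖gradVec dG‖ ^ 2 := by
    rw [gradVec_spec dG (gradVec dG), real_inner_self_eq_norm_sq]
  have h2 := dG.le_opNorm (gradVec dG)
  rw [Real.norm_eq_abs] at h2
  have h3 : ‖gradVec dG‖ ^ 2 ≤ ‖dG‖ * ‖gradVec dG‖ :=
    le_trans (by rw [← h1]; exact le_abs_self _) h2
  by_contra hcon
  push_neg at hcon
  nlinarith [norm_nonneg (gradVec dG), norm_nonneg dG]

lemma neg_gradVec (dG : EuclideanSpace ℝ (Fin d) →L[ℝ] ℝ) :
    (WithLp.toLp 2 (fun i => -(dG (EuclideanSpace.single i 1))) : EuclideanSpace ℝ (Fin d))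
      = -gradVec dG := by
  ext i
  simp [gradVec]

-- these are copies of helper lemmas from t1 (wh_*), appended below by cat

lemma wh_castSucc (w : EuclideanSpace ℝ (Fin d)) (h : ℝ) (i : Fin d) :
    withHeight d w h i.castSucc = w i := by
  simp [withHeight]

lemma wh_last (w : EuclideanSpace ℝ (Fin d)) (h : ℝ) :
    withHeight d w h (Fin.last d) = h := by
  simp [withHeight]

lemma wh_sub (w w' : EuclideanSpace ℝ (Fin d)) (h h' : ℝ) :
    withHeight d w h - withHeight d w' h' = withHeight d (w - w') (h - h') := by
  ext i
  induction i using Fin.lastCases with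
  | last => simp [wh_last, PiLp.sub_apply]
  | cast i => simp [wh_castSucc, PiLp.sub_apply]

lemma wh_add (w w' : EuclideanSpace ℝ (Fin d)) (h h' : ℝ) :
    withHeight d w h + withHeight d w' h' = withHeight d (w + w') (h + h') := by
  ext i
  induction i using Fin.lastCases with
  | last => simp [wh_last, PiLp.add_apply]
  | cast i => simp [wh_castSucc, PiLp.add_apply]

lemma wh_smul (c : ℝ) (w : EuclideanSpace ℝ (Fin d)) (h : ℝ) :
    c • withHeight d w h = withHeight d (c • w) (c * h) := by
  ext i
  induction i using Fin.lastCases with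
  | last => simp [wh_last, PiLp.smul_apply]
  | cast i => simp [wh_castSucc, PiLp.smul_apply]

lemma wh_inner (p w : EuclideanSpace ℝ (Fin d)) (q h : ℝ) :
    ⟪withHeight d p q, withHeight d w h⟫ = ⟪p, w⟫ + q * h := by
  simp only [PiLp.inner_apply, RCLike.inner_apply, conj_trivial]
  rw [Fin.sum_univ_castSucc]
  simp [wh_castSucc, wh_last]
  ring

lemma wh_norm_sq (w : EuclideanSpace ℝ (Fin d)) (h : ℝ) :
    ‖withHeight d w h‖ ^ 2 = ‖w‖ ^ 2 + h ^ 2 := by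
  rw [← real_inner_self_eq_norm_sq, ← real_inner_self_eq_norm_sq, wh_inner]
  ring

lemma wh_norm (w : EuclideanSpace ℝ (Fin d)) (h : ℝ) :
    ‖withHeight d w h‖ = Real.sqrt (‖w‖ ^ 2 + h ^ 2) := by
  rw [← wh_norm_sq, Real.sqrt_sq (norm_nonneg _)]

lemma wh_eta (y : EuclideanSpace ℝ (Fin (d+1))) :
    withHeight d (horizPart d y) (y (Fin.last d)) = y := by
  ext i
  induction i using Fin.lastCases with
  | last => simp [wh_last]
  | cast i => simp [wh_castSucc, horizPart]

lemma horiz_norm_le (y : EuclideanSpace ℝ (Fin (d+1))) :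
    ‖horizPart d y‖ ≤ ‖y‖ := by
  have h := wh_norm_sq (horizPart d y) (y (Fin.last d))
  rw [wh_eta] at h
  nlinarith [sq_nonneg (y (Fin.last d)), norm_nonneg (horizPart d y), norm_nonneg y]

lemma graphNormal_norm_le (dG : EuclideanSpace ℝ (Fin d) →L[ℝ] ℝ) :
    ‖graphNormal d dG‖ ≤ 1 := by
  have hpos : 0 < Real.sqrt (1 + ‖dG‖ ^ 2) :=
    Real.sqrt_pos.mpr (by positivity)
  rw [graphNormal, norm_smul, neg_gradVec, wh_norm, norm_neg, Real.norm_eq_abs,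
    abs_of_nonneg (by positivity)]
  have hle : Real.sqrt (‖gradVec dG‖ ^ 2 + 1 ^ 2) ≤ Real.sqrt (1 + ‖dG‖ ^ 2) := by
    apply Real.sqrt_le_sqrt
    nlinarith [gradVec_norm_le dG, norm_nonneg (gradVec dG), norm_nonneg dG]
  calc (Real.sqrt (1 + ‖dG‖ ^ 2))⁻¹ * Real.sqrt (‖gradVec dG‖ ^ 2 + 1 ^ 2)
      ≤ (Real.sqrt (1 + ‖dG‖ ^ 2))⁻¹ * Real.sqrt (1 + ‖dG‖ ^ 2) := by
        exact mul_le_mul_of_nonneg_left hle (by positivity)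
    _ = 1 := inv_mul_cancel₀ hpos.ne'

lemma inner_graphNormal (φ : EuclideanSpace ℝ (Fin (d+1)))
    (dG : EuclideanSpace ℝ (Fin d) →L[ℝ] ℝ) :
    ⟪φ, graphNormal d dG⟫ = (Real.sqrt (1 + ‖dG‖ ^ 2))⁻¹ *
      (φ (Fin.last d) - ⟪horizPart d φ, gradVec dG⟫) := by
  rw [graphNormal, real_inner_smul_right, neg_gradVec]
  congr 1
  conv_lhs => rw [← wh_eta φ]
  rw [wh_inner, inner_neg_right, mul_one]
  ring

lemma lemA {g : ℝ → ℝ} {K : NNReal} (hg : LipschitzWith K g) {c : ℝ}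
    (hc : ∀ᵐ t ∂(volume : Measure ℝ), t ∈ Set.Icc (0:ℝ) 1 →
      ∃ m, HasDerivAt g m t ∧ m ≤ c) :
    g 1 - g 0 ≤ c := by
  classical
  set B : Set ℝ := {t | ¬ (t ∈ Set.Icc (0:ℝ) 1 → ∃ m, HasDerivAt g m t ∧ m ≤ c)} with hBdef
  have hB : volume B = 0 := hc
  -- a good point exists, giving `-K ≤ c`
  have hKc : -(K:ℝ) ≤ c := by
    have h1 : volume (Set.Icc (0:ℝ) 1 \ B) ≠ 0 := by
      intro h0
      have : volume (Set.Icc (0:ℝ) 1) = 0 := by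
        have hle := measure_union_le (μ := (volume : Measure ℝ)) (Set.Icc (0:ℝ) 1 \ B) B
        rw [h0, hB, add_zero] at hle
        exact le_antisymm (le_trans (measure_mono (by
          intro t ht; by_cases h : t ∈ B
          · exact Set.mem_union_right _ h
          · exact Set.mem_union_left _ ⟨ht, h⟩)) hle) zero_le
      simp [Real.volume_Icc] at this
    obtain ⟨t₀, ht₀⟩ := nonempty_of_measure_ne_zero h1
    obtain ⟨m, hm, hmc⟩ := not_not.mp ht₀.2 ht₀.1
    have hlip : ‖m‖ ≤ (K:ℝ) := by
      have h := (hasDerivAt_iff_hasFDerivAt.mp hm).le_of_lipschitz hg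
      rwa [ContinuousLinearMap.norm_toSpanSingleton] at h
    have : -(K:ℝ) ≤ m := by
      have := abs_le.mp (by rwa [Real.norm_eq_abs] at hlip)
      linarith [this.1]
    linarith
  have hK0 : (0:ℝ) ≤ (K:ℝ) := K.coe_nonneg
  -- main estimate with ε
  have main : ∀ ε : ℝ, 0 < ε → g 1 - g 0 ≤ c + ε * (1 + 2*(K:ℝ)) := by
    intro ε hε
    obtain ⟨U, hBU, hUo, hU⟩ := Set.exists_isOpen_lt_of_lt B (ENNReal.ofReal ε)
      (by rw [hB]; exact ENNReal.ofReal_pos.mpr hε)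
    set m : ℝ → ℝ := fun t => (volume (U ∩ Set.Ioc 0 t)).toReal with hmdef
    have hfin : ∀ t, volume (U ∩ Set.Ioc 0 t) ≠ ⊤ := by
      intro t
      exact ne_top_of_le_ne_top (by exact (lt_of_lt_of_le hU le_top).ne) (measure_mono Set.inter_subset_left)
    have hmono : ∀ s t : ℝ, s ≤ t → m s ≤ m t := by
      intro s t hst
      exact ENNReal.toReal_mono (hfin t)
        (measure_mono (Set.inter_subset_inter_right _ (Set.Ioc_subset_Ioc_right hst)))
    have hneg : ∀ s : ℝ, s ≤ 0 → m s = 0 := by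
      intro s hs
      simp [hmdef, Set.Ioc_eq_empty (by simpa using hs : ¬ (0:ℝ) < s)]
    have hub : ∀ s t : ℝ, m t - m s ≤ t - s ∧ (0 ≤ s → s ≤ t →
        m t - m s = (volume (U ∩ Set.Ioc s t)).toReal) → True := fun _ _ _ => trivial
    have hsplit : ∀ s t : ℝ, 0 ≤ s → s ≤ t →
        m t = m s + (volume (U ∩ Set.Ioc s t)).toReal := by
      intro s t h0s hst
      have hdis : Disjoint (U ∩ Set.Ioc 0 s) (U ∩ Set.Ioc s t) :=
        Set.disjoint_of_subset Set.inter_subset_right Set.inter_subset_right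
          (Set.Ioc_disjoint_Ioc_of_le le_rfl)
      have hun : U ∩ Set.Ioc 0 t = (U ∩ Set.Ioc 0 s) ∪ (U ∩ Set.Ioc s t) := by
        rw [← Set.inter_union_distrib_left, Set.Ioc_union_Ioc_eq_Ioc h0s hst]
      rw [hmdef]
      simp only
      rw [hun, measure_union hdis (hUo.measurableSet.inter measurableSet_Ioc),
        ENNReal.toReal_add (hfin s) (ne_top_of_le_ne_top ((lt_of_lt_of_le hU le_top).ne)
          (measure_mono Set.inter_subset_left))]
    have hgrow : ∀ s t : ℝ, 0 ≤ s → s ≤ t → m t - m s ≤ t - s := by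
      intro s t h0s hst
      rw [hsplit s t h0s hst]
      have : volume (U ∩ Set.Ioc s t) ≤ ENNReal.ofReal (t - s) := by
        rw [← Real.volume_Ioc]; exact measure_mono Set.inter_subset_right
      have := ENNReal.toReal_le_of_le_ofReal (by linarith) this
      linarith
    have haux : ∀ s t : ℝ, s ≤ t → m t - m s ≤ t - s := by
      intro s t hst
      rcases le_or_gt 0 s with h0s | h0s
      · exact hgrow s t h0s hst
      rcases le_or_gt t 0 with ht0 | ht0
      · rw [hneg s h0s.le, hneg t ht0]; linarith
      · have h := hgrow 0 t le_rfl ht0.le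
        rw [hneg 0 le_rfl] at h
        rw [hneg s h0s.le]
        linarith
    have hlip : LipschitzWith 1 m := by
      apply LipschitzWith.of_dist_le_mul
      intro s t
      rw [Real.dist_eq, Real.dist_eq, NNReal.coe_one, one_mul]
      rcases le_total s t with hst | hst
      · rw [abs_of_nonpos (by linarith [hmono s t hst]), abs_of_nonpos (by linarith)]
        linarith [haux s t hst]
      · rw [abs_of_nonneg (by linarith [hmono t s hst]), abs_of_nonneg (by linarith)]
        linarith [haux t s hst]
    set T : Set ℝ := {t | t ∈ Set.Icc (0:ℝ) 1 ∧ g t - g 0 ≤ (c+ε)*t + 2*(K:ℝ)*(m t)}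
      with hTdef
    have hTclosed : IsClosed T := by
      apply IsClosed.inter isClosed_Icc
      exact isClosed_le ((hg.continuous).sub continuous_const)
        (((continuous_const.mul continuous_id).add
          (continuous_const.mul hlip.continuous)))
    have h0T : (0:ℝ) ∈ T := by
      constructor
      · exact ⟨le_rfl, zero_le_one⟩
      · rw [hneg 0 le_rfl]; simp
    have hbdd : BddAbove T := ⟨1, fun t ht => ht.1.2⟩
    set τ := sSup T with hτdef
    have hτT : τ ∈ T := hTclosed.csSup_mem ⟨0, h0T⟩ hbdd
    have hτ0 : 0 ≤ τ := hτT.1.1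
    have hτ1 : τ ≤ 1 := hτT.1.2
    rcases eq_or_lt_of_le hτ1 with heq | hlt
    · -- τ = 1 : conclude
      have hfinal := hτT.2
      rw [heq] at hfinal
      have hm1 : m 1 ≤ ε := by
        have h1 : volume (U ∩ Set.Ioc 0 1) ≤ ENNReal.ofReal ε :=
          le_trans (measure_mono Set.inter_subset_left) hU.le
        exact ENNReal.toReal_le_of_le_ofReal hε.le h1
      nlinarith
    · -- τ < 1 : extend, contradiction
      exfalso
      have hstep : ∃ t', τ < t' ∧ t' ∈ T := by
        by_cases hτB : τ ∈ B
        · -- τ in the open set U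
          obtain ⟨δ, hδ, hball⟩ := Metric.isOpen_iff.mp hUo τ (hBU hτB)
          refine ⟨min 1 (τ + δ/2), by simp [lt_min_iff]; exact ⟨hlt, by linarith⟩, ?_⟩
          set t' := min 1 (τ + δ/2) with ht'def
          have hτt' : τ < t' := by simp [ht'def, lt_min_iff]; exact ⟨hlt, by linarith⟩
          have ht'1 : t' ≤ 1 := min_le_left _ _
          have hIocU : Set.Ioc τ t' ⊆ U := by
            intro s hs
            apply hball
            rw [mem_ball_iff_norm, Real.norm_eq_abs, abs_of_pos (by linarith [hs.1])]
            have : s ≤ τ + δ/2 := le_trans hs.2 (min_le_right _ _)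
            linarith [hs.1]
          have hmdiff : m t' - m τ = t' - τ := by
            rw [hsplit τ t' hτ0 hτt'.le, Set.inter_eq_self_of_subset_right hIocU,
              Real.volume_Ioc, ENNReal.toReal_ofReal (by linarith)]
            ring
          have hgd : g t' - g τ ≤ (K:ℝ) * (t' - τ) := by
            have h := hg.dist_le_mul t' τ
            rw [Real.dist_eq, Real.dist_eq,
              (show |t' - τ| = t' - τ from abs_of_nonneg (by linarith))] at h
            exact le_trans (le_abs_self _) h
          refine ⟨⟨le_trans hτ0 hτt'.le, ht'1⟩, ?_⟩
          have hτineq := hτT.2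
          nlinarith [hτt'.le]
        · -- τ is a good differentiability point
          obtain ⟨m₀, hder, hm₀c⟩ := not_not.mp hτB ⟨hτ0, hτ1⟩
          have hlo := (hasDerivAt_iff_isLittleO.mp hder).bound hε
          rw [Metric.eventually_nhds_iff] at hlo
          obtain ⟨δ, hδ, hδprop⟩ := hlo
          set t' := min 1 (τ + δ/2) with ht'def
          have hτt' : τ < t' := by simp [ht'def, lt_min_iff]; exact ⟨hlt, by linarith⟩
          have ht'1 : t' ≤ 1 := min_le_left _ _
          have hest := hδprop (y := t') (by
            rw [Real.dist_eq, abs_of_nonneg (by linarith)]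
            have : t' ≤ τ + δ/2 := min_le_right _ _
            linarith)
          rw [Real.norm_eq_abs, Real.norm_eq_abs, smul_eq_mul] at hest
          have h1 : g t' - g τ ≤ (c + ε) * (t' - τ) := by
            have h2 := (abs_le.mp hest).2
            rw [abs_of_nonneg (by linarith)] at h2
            nlinarith
          refine ⟨min 1 (τ + δ/2), hτt', ⟨⟨le_trans hτ0 hτt'.le, ht'1⟩, ?_⟩⟩
          have hτineq := hτT.2
          have hmm := hmono τ t' hτt'.le
          nlinarith
      obtain ⟨t', ht'τ, ht'T⟩ := hstep
      exact absurd (le_csSup hbdd ht'T) (not_le.mpr ht'τ)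
  -- conclude
  by_contra hcon
  push_neg at hcon
  have hpos : (0:ℝ) < 1 + 2*(K:ℝ) := by linarith
  obtain hε := main ((g 1 - g 0 - c) / (2 * (1 + 2*(K:ℝ))))
    (div_pos (by linarith) (by linarith))
  have : (g 1 - g 0 - c) / (2 * (1 + 2*(K:ℝ))) * (1 + 2*(K:ℝ)) = (g 1 - g 0 - c)/2 := by
    field_simp
  rw [this] at hε
  linarith

lemma lemB {d : ℕ} {E : Set (EuclideanSpace ℝ (Fin d))} (hE : volume E = 0)
    (u : EuclideanSpace ℝ (Fin d)) :
    ∀ᵐ a ∂(volume : Measure (EuclideanSpace ℝ (Fin d))),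
      ∀ᵐ t ∂(volume : Measure ℝ), a + t • u ∉ E := by
  obtain ⟨E', hEE', hE'm, hE'0⟩ := exists_measurable_superset_of_null hE
  have hmap : Measurable fun p : (EuclideanSpace ℝ (Fin d)) × ℝ => p.1 + p.2 • u :=
    measurable_fst.add (measurable_snd.smul_const u)
  set S := (fun p : (EuclideanSpace ℝ (Fin d)) × ℝ => p.1 + p.2 • u) ⁻¹' E' with hSdef
  have hSm : MeasurableSet S := hmap hE'm
  have hS0 : ((volume : Measure (EuclideanSpace ℝ (Fin d))).prod
      (volume : Measure ℝ)) S = 0 := by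
    rw [Measure.prod_apply_symm hSm]
    have hz : ∀ t : ℝ, volume ((fun a : EuclideanSpace ℝ (Fin d) => (a, t)) ⁻¹' S) = 0 := by
      intro t
      have he : ((fun a : EuclideanSpace ℝ (Fin d) => (a, t)) ⁻¹' S)
          = (fun a => a + t • u) ⁻¹' E' := rfl
      rw [he, measure_preimage_add_right]
      exact hE'0
    simp [hz]
  have hae := (Measure.measure_prod_null hSm).mp hS0
  filter_upwards [hae] with a ha
  rw [ae_iff]
  refine measure_mono_null ?_ ha
  intro t ht
  simp only [Set.mem_setOf_eq, not_not] at ht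
  exact hEE' ht

lemma lemC {d : ℕ} {G : EuclideanSpace ℝ (Fin d) → ℝ} {Λ : NNReal}
    (hG : LipschitzWith Λ G) {V E : Set (EuclideanSpace ℝ (Fin d))}
    (hE : volume E = 0) {c : ℝ} {a b : EuclideanSpace ℝ (Fin d)} {δ₀ : ℝ} (hδ₀ : 0 < δ₀)
    (hseg : ∀ t ∈ Set.Icc (0:ℝ) 1, ∀ h : EuclideanSpace ℝ (Fin d), ‖h‖ < δ₀ →
      (a + h) + t • (b - a) ∈ V)
    (hgood : ∀ w ∈ V \ E, ∃ dG : EuclideanSpace ℝ (Fin d) →L[ℝ] ℝ,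
      HasFDerivAt G dG w ∧ dG (b - a) ≤ c) :
    G b - G a ≤ c := by
  classical
  set u := b - a with hu
  have key : ∀ n : ℕ, ∃ a' : EuclideanSpace ℝ (Fin d),
      dist a' a < min δ₀ (1/(n+1)) ∧ G (a' + u) - G a' ≤ c := by
    intro n
    have hr : 0 < min δ₀ (1/(n+1:ℝ)) := lt_min hδ₀ (by positivity)
    set Q : Set (EuclideanSpace ℝ (Fin d)) :=
      {a' | ∀ᵐ t ∂(volume : Measure ℝ), a' + t • u ∉ E} with hQdef
    have hQnull : volume Qᶜ = 0 := by
      have := lemB hE u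
      rwa [ae_iff] at this
    have hne : (Metric.ball a (min δ₀ (1/(n+1))) ∩ Q).Nonempty := by
      by_contra hcon
      rw [Set.not_nonempty_iff_eq_empty] at hcon
      have hsub : Metric.ball a (min δ₀ (1/(n+1))) ⊆ Qᶜ := by
        intro z hz
        intro hzQ
        exact Set.eq_empty_iff_forall_notMem.mp hcon z ⟨hz, hzQ⟩
      exact (measure_ball_pos volume a hr).ne' (measure_mono_null hsub hQnull)
    obtain ⟨a', ha'ball, ha'Q⟩ := hne
    refine ⟨a', by rwa [mem_ball] at ha'ball, ?_⟩
    -- the function along the segment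
    set g : ℝ → ℝ := fun t => G (a' + t • u) with hgdef
    have hline : LipschitzWith ‖u‖₊ (fun t : ℝ => a' + t • u) := by
      apply LipschitzWith.of_dist_le_mul
      intro s t
      rw [dist_eq_norm]
      have : a' + s • u - (a' + t • u) = (s - t) • u := by
        rw [add_sub_add_left_eq_sub, ← sub_smul]
      rw [this, norm_smul, Real.norm_eq_abs, ← Real.dist_eq, coe_nnnorm, mul_comm]
    have hglip : LipschitzWith (Λ * ‖u‖₊) g := hG.comp hline
    have hae : ∀ᵐ t ∂(volume : Measure ℝ), t ∈ Set.Icc (0:ℝ) 1 →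
        ∃ m, HasDerivAt g m t ∧ m ≤ c := by
      filter_upwards [ha'Q] with t htE htIcc
      have hdista : ‖a' - a‖ < δ₀ := by
        rw [← dist_eq_norm]
        exact lt_of_lt_of_le (mem_ball.mp ha'ball) (min_le_left _ _)
      have hwV : a' + t • u ∈ V := by
        have := hseg t htIcc (a' - a) hdista
        rwa [add_sub_cancel] at this
      obtain ⟨dG, hdG, hdGc⟩ := hgood (a' + t • u) ⟨hwV, htE⟩
      refine ⟨dG u, ?_, hdGc⟩
      have hl : HasDerivAt (fun s : ℝ => a' + s • u) u t := by
        have h1 : HasDerivAt (fun s : ℝ => s • u) ((1:ℝ) • u) t :=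
          (hasDerivAt_id t).smul_const u
        rw [one_smul] at h1
        exact h1.const_add a'
      exact hdG.comp_hasDerivAt t hl
    have := lemA hglip hae
    simpa [hgdef, one_smul] using this
  choose aseq haseq using key
  have htend : Filter.Tendsto aseq Filter.atTop (nhds a) := by
    rw [tendsto_iff_dist_tendsto_zero]
    apply squeeze_zero (fun n => dist_nonneg)
      (fun n => (haseq n).1.le.trans (min_le_right _ _))
    exact tendsto_one_div_add_atTop_nhds_zero_nat
  have hcont : Filter.Tendsto (fun n => G (aseq n + u) - G (aseq n))
      Filter.atTop (nhds (G (a + u) - G a)) := by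
    have h1 : Continuous fun z : EuclideanSpace ℝ (Fin d) => G (z + u) - G z :=
      (hG.continuous.comp (continuous_id.add continuous_const)).sub hG.continuous
    exact (h1.tendsto a).comp htend
  have hle := le_of_tendsto hcont (Filter.Eventually.of_forall fun n => (haseq n).2)
  rwa [hu, add_sub_cancel] at hle

lemma horiz_continuous (d : ℕ) : Continuous (horizPart d) := by
  apply (PiLp.continuous_toLp ..).comp
  apply continuous_pi
  intro i
  exact (continuous_apply (i.castSucc)).comp (PiLp.continuous_ofLp ..)

lemma lemD {d : ℕ} {Ω : Set (EuclideanSpace ℝ (Fin (d+1)))} (hΩo : IsOpen Ω)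
    {x₀ : EuclideanSpace ℝ (Fin (d+1))} {ε L : ℝ}
    {A : EuclideanSpace ℝ (Fin (d+1)) ≃ᵃⁱ[ℝ] EuclideanSpace ℝ (Fin (d+1))}
    {G : EuclideanSpace ℝ (Fin d) → ℝ}
    (hch : IsLipschitzChart d Ω x₀ ε L A G)
    {z : EuclideanSpace ℝ (Fin (d+1))} (hz : z ∈ frontier Ω) (hzb : z ∈ ball x₀ ε) :
    (A.symm z) (Fin.last d) = G (horizPart d (A.symm z)) := by
  obtain ⟨hε, hA0, hG, hset⟩ := hch
  set S : Set (EuclideanSpace ℝ (Fin (d+1))) :=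
    {y | y (Fin.last d) < G (horizPart d y)} with hSdef
  have hf : Continuous fun y : EuclideanSpace ℝ (Fin (d+1)) =>
      y (Fin.last d) - G (horizPart d y) :=
    ((continuous_apply (Fin.last d)).comp (PiLp.continuous_ofLp ..)).sub (hG.continuous.comp (horiz_continuous d))
  have hSfr : frontier S ⊆ {y | y (Fin.last d) = G (horizPart d y)} := by
    have hpre : S = (fun y : EuclideanSpace ℝ (Fin (d+1)) =>
        y (Fin.last d) - G (horizPart d y)) ⁻¹' (Set.Iio 0) := by
      ext y; simp [hSdef, sub_neg]
    rw [hpre]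
    refine (hf.frontier_preimage_subset _).trans ?_
    rw [frontier_Iio]
    intro y hy
    simp only [Set.mem_preimage, Set.mem_singleton_iff] at hy
    simpa [sub_eq_zero] using hy
  have hcl : z ∈ closure (A '' S) := by
    rw [mem_closure_iff_nhds]
    intro t ht
    have hzcl : z ∈ closure Ω := frontier_subset_closure hz
    obtain ⟨w, ⟨hwt, hwb⟩, hwΩ⟩ := mem_closure_iff_nhds.mp hzcl (t ∩ ball x₀ ε)
      (Filter.inter_mem ht (isOpen_ball.mem_nhds hzb))
    have hw2 : w ∈ ball x₀ ε ∩ Ω := ⟨hwb, hwΩ⟩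
    rw [hset] at hw2
    exact ⟨w, hwt, hw2.2⟩
  have hni : z ∉ interior (A '' S) := by
    intro hzi
    have hzΩ : z ∈ Ω := by
      have hmem : A '' S ∩ ball x₀ ε ∈ nhds z :=
        Filter.inter_mem (mem_interior_iff_mem_nhds.mp hzi) (isOpen_ball.mem_nhds hzb)
      have hsub : A '' S ∩ ball x₀ ε ⊆ Ω := by
        intro w hw
        have : w ∈ ball x₀ ε ∩ Ω := by rw [hset]; exact ⟨hw.2, hw.1⟩
        exact this.2
      have : Ω ∈ nhds z := Filter.mem_of_superset hmem hsub
      exact mem_of_mem_nhds this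
    rw [hΩo.frontier_eq] at hz
    exact hz.2 hzΩ
  have hzf : z ∈ frontier (A '' S) := ⟨hcl, hni⟩
  have himg : (A.toHomeomorph) '' frontier S = frontier ((A.toHomeomorph) '' S) :=
    A.toHomeomorph.image_frontier S
  rw [A.coe_toHomeomorph] at himg
  rw [← himg] at hzf
  obtain ⟨ζ, hζfr, hζz⟩ := hzf
  have hζ : ζ = A.symm z := by
    rw [← hζz, A.symm_apply_apply]
  rw [← hζ]
  exact hSfr hζfr


variable {d : ℕ}

lemma memK {γ' : ℝ} (hγ'0 : 0 < γ') (φ : EuclideanSpace ℝ (Fin (d+1)))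
    {dG : EuclideanSpace ℝ (Fin d) →L[ℝ] ℝ} {Λ : ℝ} (hdGn : ‖dG‖ ≤ Λ)
    (hinner2 : γ' ≤ ⟪φ, graphNormal d dG⟫) :
    ‖gradVec dG‖ ≤ Λ ∧
      ⟪horizPart d φ, gradVec dG⟫ + γ' * Real.sqrt (1 + ‖gradVec dG‖^2)
        ≤ φ (Fin.last d) := by
  rw [inner_graphNormal] at hinner2
  have hsq : 0 < Real.sqrt (1 + ‖dG‖^2) := Real.sqrt_pos.mpr (by positivity)
  have h9 : γ' * Real.sqrt (1 + ‖dG‖^2)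
      ≤ φ (Fin.last d) - ⟪horizPart d φ, gradVec dG⟫ := by
    rw [inv_mul_eq_div] at hinner2
    exact (le_div_iff₀ hsq).mp hinner2
  have h10 : Real.sqrt (1 + ‖gradVec dG‖^2) ≤ Real.sqrt (1 + ‖dG‖^2) := by
    apply Real.sqrt_le_sqrt
    nlinarith [gradVec_norm_le dG, norm_nonneg (gradVec dG), norm_nonneg dG]
  refine ⟨le_trans (gradVec_norm_le dG) hdGn, ?_⟩
  have h11 := mul_le_mul_of_nonneg_left h10 hγ'0.le
  linarith

lemma wh_norm_le {w : EuclideanSpace ℝ (Fin d)} {a b C : ℝ}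
    (h1 : ‖w‖ ≤ a) (h2 : |b| ≤ C * ‖w‖) (hC : 0 ≤ C) :
    ‖withHeight d w b‖ ≤ a * (1 + C) := by
  have ha : 0 ≤ a := le_trans (norm_nonneg _) h1
  rw [wh_norm]
  have habs := abs_le.mp h2
  have hw2 : ‖w‖^2 ≤ a^2 := by nlinarith [norm_nonneg w]
  have hb2 : b^2 ≤ C^2 * ‖w‖^2 := by nlinarith [sq_le_sq' habs.1 habs.2]
  have hb2' : C^2 * ‖w‖^2 ≤ C^2 * a^2 := mul_le_mul_of_nonneg_left hw2 (sq_nonneg C)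
  have hsq : ‖w‖^2 + b^2 ≤ (a*(1+C))^2 := by
    nlinarith [mul_nonneg (mul_nonneg hC ha) ha]
  calc Real.sqrt (‖w‖^2 + b^2) ≤ Real.sqrt ((a*(1+C))^2) := Real.sqrt_le_sqrt hsq
    _ = a*(1+C) := Real.sqrt_sq (by positivity)

lemma finalAlg {γ' : ℝ} (hγ'0 : 0 < γ') (hγ'1 : γ' ≤ 1/2)
    {H : Type*} [NormedAddCommGroup H] [InnerProductSpace ℝ H]
    {φ ν₀ ζ : H} (hφ1 : ‖φ‖ = 1) (hν₀n : ‖ν₀‖ = 1)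
    (hζν₀ : ⟪ζ, ν₀⟫ = 0) (hφν₀ : γ' ≤ ⟪φ, ν₀⟫) :
    |⟪φ, ζ⟫| ≤ Real.sqrt (1 - γ'^2) * ‖ζ‖ := by
  have hφν₀le : ⟪φ, ν₀⟫ ≤ 1 := by
    have h := real_inner_le_norm φ ν₀
    rwa [hφ1, hν₀n, one_mul] at h
  have hexp : ⟪φ, ζ⟫ = ⟪φ - ⟪φ, ν₀⟫ • ν₀, ζ⟫ := by
    have h0 : ⟪ν₀, ζ⟫ = 0 := by rw [real_inner_comm]; exact hζν₀
    rw [inner_sub_left, real_inner_smul_left, h0]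
    ring
  have hnorm2 : ‖φ - ⟪φ, ν₀⟫ • ν₀‖^2 = 1 - ⟪φ, ν₀⟫^2 := by
    rw [norm_sub_sq_real, real_inner_smul_right, hφ1, norm_smul, Real.norm_eq_abs,
      hν₀n, mul_one, sq_abs]
    ring
  rw [hexp]
  refine le_trans (abs_real_inner_le_norm _ _)
    (mul_le_mul_of_nonneg_right ?_ (norm_nonneg _))
  have h1 : ‖φ - ⟪φ, ν₀⟫ • ν₀‖^2 ≤ 1 - γ'^2 := by
    rw [hnorm2]; nlinarith
  have h2 := Real.sqrt_le_sqrt h1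
  rwa [Real.sqrt_sq (norm_nonneg _)] at h2

lemma finalAlg2 {γ' : ℝ} (hγ'0 : 0 < γ') (hγ'1 : γ' ≤ 1/2)
    {H : Type*} [NormedAddCommGroup H] [InnerProductSpace ℝ H]
    {v p : H} (hp1 : ‖p‖ = 1)
    (ht : |⟪p, v⟫| ≤ Real.sqrt (1 - γ'^2) * ‖v‖) :
    ‖v‖ ≤ (1/γ') * ‖v - ⟪p, v⟫ • p‖ := by
  have h1γ : (0:ℝ) ≤ 1 - γ'^2 := by nlinarith
  have hPsq : ‖v - ⟪p, v⟫ • p‖^2 = ‖v‖^2 - ⟪p, v⟫^2 := by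
    rw [norm_sub_sq_real, real_inner_smul_right, norm_smul, Real.norm_eq_abs, hp1,
      mul_one, sq_abs, real_inner_comm v p]
    ring
  have htsq : ⟪p, v⟫^2 ≤ (1 - γ'^2) * ‖v‖^2 := by
    rw [← sq_abs]
    have h1 := mul_self_le_mul_self (abs_nonneg _) ht
    calc |⟪p, v⟫|^2 = |⟪p, v⟫| * |⟪p, v⟫| := sq _
      _ ≤ (Real.sqrt (1 - γ'^2) * ‖v‖) * (Real.sqrt (1 - γ'^2) * ‖v‖) := h1
      _ = (Real.sqrt (1 - γ'^2) * Real.sqrt (1 - γ'^2)) * (‖v‖ * ‖v‖) := by ring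
      _ = (1 - γ'^2) * ‖v‖^2 := by rw [Real.mul_self_sqrt h1γ]; ring
  have hγζ : γ' * ‖v‖ ≤ ‖v - ⟪p, v⟫ • p‖ := by
    by_contra hcon
    push_neg at hcon
    nlinarith [norm_nonneg (v - ⟪p, v⟫ • p), norm_nonneg v]
  rw [one_div]
  have hfinal := mul_le_mul_of_nonneg_left hγζ (inv_nonneg.mpr hγ'0.le)
  rw [← mul_assoc, inv_mul_cancel₀ hγ'0.ne', one_mul] at hfinal
  exact hfinal

set_option maxHeartbeats 2000000 in
lemma localLem {d : ℕ} {Ω : Set (EuclideanSpace ℝ (Fin (d+1)))} (hΩo : IsOpen Ω)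
    {γ' : ℝ} (hγ'0 : 0 < γ') (hγ'1 : γ' ≤ 1/2)
    {ψ : EuclideanSpace ℝ (Fin (d+1)) → EuclideanSpace ℝ (Fin (d+1))}
    (hψ1 : ∀ x ∈ frontier Ω, ‖ψ x‖ = 1)
    {δψ : ℝ} (hδψ0 : 0 < δψ)
    (hψu : ∀ a b : EuclideanSpace ℝ (Fin (d+1)), dist a b < δψ → dist (ψ a) (ψ b) < γ')
    {x₀ : EuclideanSpace ℝ (Fin (d+1))} (hx₀ : x₀ ∈ frontier Ω)
    {ε L : ℝ} {A : EuclideanSpace ℝ (Fin (d+1)) ≃ᵃⁱ[ℝ] EuclideanSpace ℝ (Fin (d+1))}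
    {G : EuclideanSpace ℝ (Fin d) → ℝ}
    (hch : IsLipschitzChart d Ω x₀ ε L A G)
    (hν : ∀ (w : EuclideanSpace ℝ (Fin d)) (dG : EuclideanSpace ℝ (Fin d) →L[ℝ] ℝ),
      HasFDerivAt G dG w → ∀ y, y = A (withHeight d w (G w)) → y ∈ ball x₀ ε →
        2*γ' ≤ ⟪ψ y, A.linearIsometryEquiv (graphNormal d dG)⟫) :
    ∃ r : ℝ, 0 < r ∧ ∀ x ∈ frontier Ω, ∀ y ∈ frontier Ω,
      x ∈ ball x₀ r → y ∈ ball x₀ r →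
      ‖x - y‖ ≤ (1/γ') * ‖(x - y) - ⟪ψ y, x - y⟫ • ψ y‖ := by
  obtain ⟨hε, hA0, hGlip, hset⟩ := hch
  have hch' : IsLipschitzChart d Ω x₀ ε L A G := ⟨hε, hA0, hGlip, hset⟩
  set Λ : ℝ := (Real.toNNReal L : ℝ) with hΛdef
  have hΛ0 : 0 ≤ Λ := NNReal.coe_nonneg _
  set M := min ε δψ with hMdef
  have hM0 : 0 < M := lt_min hε hδψ0
  have hMε : M ≤ ε := min_le_left _ _
  have hMδ : M ≤ δψ := min_le_right _ _
  set r := M / (8 * (1 + Λ)) with hrdef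
  have hr0 : 0 < r := by positivity
  have hrM : r * (8 * (1 + Λ)) = M := by
    rw [hrdef]; field_simp
  have h8r : 8 * r ≤ M := by nlinarith
  have hrε : r < ε := by nlinarith
  refine ⟨r, hr0, ?_⟩
  intro x hx y hy hxb hyb
  have hsymm0 : A.symm x₀ = 0 := by rw [← hA0, A.symm_apply_apply]
  have hG0 : G 0 = 0 := by
    have h := lemD hΩo hch' hx₀ (mem_ball_self hε)
    rw [hsymm0] at h
    have h0 : horizPart d (0 : EuclideanSpace ℝ (Fin (d+1))) = 0 := by
        ext i; simp [horizPart]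
    rw [h0] at h
    simpa using h.symm
  have hGbound : ∀ w, |G w| ≤ Λ * ‖w‖ := by
    intro w
    have h := hGlip.dist_le_mul w 0
    rw [Real.dist_eq, hG0, sub_zero, dist_zero_right] at h
    exact h
  have hrep : ∀ z ∈ frontier Ω, z ∈ ball x₀ r →
      A (withHeight d (horizPart d (A.symm z)) (G (horizPart d (A.symm z)))) = z ∧
      ‖horizPart d (A.symm z)‖ < r := by
    intro z hz hzb
    have hzε : z ∈ ball x₀ ε := mem_ball.mpr (lt_trans (mem_ball.mp hzb) hrε)
    have hg := lemD hΩo hch' hz hzε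
    constructor
    · rw [← hg, wh_eta, A.apply_symm_apply]
    · have h1 : dist (A.symm z) 0 = dist z x₀ := by
        rw [← hsymm0]; exact A.symm.dist_map z x₀
      have h2 : ‖A.symm z‖ < r := by
        rw [← dist_zero_right, h1]; exact mem_ball.mp hzb
      exact lt_of_le_of_lt (horiz_norm_le _) h2
  set wx := horizPart d (A.symm x) with hwxdef
  set wy := horizPart d (A.symm y) with hwydef
  obtain ⟨hxA, hwxr⟩ := hrep x hx hxb
  obtain ⟨hyA, hwyr⟩ := hrep y hy hyb
  set E : Set (EuclideanSpace ℝ (Fin d)) := {w | ¬ DifferentiableAt ℝ G w} with hEdef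
  have hE : volume E = 0 := by
    have h := hGlip.ae_differentiableAt (μ := volume)
    rwa [ae_iff] at h
  set V := ball (0 : EuclideanSpace ℝ (Fin d)) (4*r) with hVdef
  set φ := A.linearIsometryEquiv.symm (ψ y) with hφdef
  have hψyφ : A.linearIsometryEquiv φ = ψ y := A.linearIsometryEquiv.apply_symm_apply _
  have hφ1 : ‖φ‖ = 1 := by
    rw [hφdef, LinearIsometryEquiv.norm_map]; exact hψ1 y hy
  set K' : Set (EuclideanSpace ℝ (Fin d)) :=
    {s | ‖s‖ ≤ Λ ∧ ⟪horizPart d φ, s⟫ + γ' * Real.sqrt (1 + ‖s‖^2) ≤ φ (Fin.last d)}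
    with hK'def
  -- every differentiability point in V gives a gradient in K'
  have hKmem : ∀ w' ∈ V \ E, ∃ dG : EuclideanSpace ℝ (Fin d) →L[ℝ] ℝ,
      HasFDerivAt G dG w' ∧ gradVec dG ∈ K' := by
    intro w' hw'
    have hdiff : DifferentiableAt ℝ G w' := not_not.mp hw'.2
    refine ⟨fderiv ℝ G w', hdiff.hasFDerivAt, ?_⟩
    set dG := fderiv ℝ G w' with hdGdef
    have hdGA : HasFDerivAt G dG w' := hdiff.hasFDerivAt
    have hdGn : ‖dG‖ ≤ Λ := hdGA.le_of_lipschitz hGlip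
    have hw'4r : ‖w'‖ < 4*r := mem_ball_zero_iff.mp hw'.1
    have hζ'n : ‖withHeight d w' (G w')‖ ≤ (4*r)*(1+Λ) :=
      wh_norm_le hw'4r.le (hGbound w') hΛ0
    have hMhalf : (4*r)*(1+Λ) ≤ M/2 := by nlinarith
    have hdy'x₀ : dist (A (withHeight d w' (G w'))) x₀ ≤ M/2 := by
      rw [← hA0, A.dist_map, dist_zero_right]
      exact le_trans hζ'n hMhalf
    have hy'ball : A (withHeight d w' (G w')) ∈ ball x₀ ε :=
      mem_ball.mpr (lt_of_le_of_lt hdy'x₀ (lt_of_lt_of_le (by linarith) hMε))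
    have hdy'y : dist (A (withHeight d w' (G w'))) y < δψ := by
      have h1 := dist_triangle (A (withHeight d w' (G w'))) x₀ y
      have h2 : dist x₀ y < r := by rw [dist_comm]; exact mem_ball.mp hyb
      have h3 : r ≤ M/8 := by nlinarith
      linarith
    have hcon := hν w' dG hdGA (A (withHeight d w' (G w'))) rfl hy'ball
    have hnun : ‖A.linearIsometryEquiv (graphNormal d dG)‖ ≤ 1 := by
      rw [LinearIsometryEquiv.norm_map]; exact graphNormal_norm_le dG
    have hψd : ‖ψ y - ψ (A (withHeight d w' (G w')))‖ < γ' := by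
      rw [← dist_eq_norm]
      exact hψu y _ (by rw [dist_comm]; exact hdy'y)
    have hinner : γ' ≤ ⟪ψ y, A.linearIsometryEquiv (graphNormal d dG)⟫ := by
      have h5 : ⟪ψ y - ψ (A (withHeight d w' (G w'))),
          A.linearIsometryEquiv (graphNormal d dG)⟫
          = ⟪ψ y, A.linearIsometryEquiv (graphNormal d dG)⟫
            - ⟪ψ (A (withHeight d w' (G w'))),
              A.linearIsometryEquiv (graphNormal d dG)⟫ := inner_sub_left _ _ _
      have h6 := abs_real_inner_le_norm (ψ y - ψ (A (withHeight d w' (G w'))))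
        (A.linearIsometryEquiv (graphNormal d dG))
      have h7 : ‖ψ y - ψ (A (withHeight d w' (G w')))‖
          * ‖A.linearIsometryEquiv (graphNormal d dG)‖ ≤ γ' * 1 :=
        mul_le_mul hψd.le hnun (norm_nonneg _) hγ'0.le
      have h8 := (abs_le.mp h6).1
      rw [h5] at h8
      linarith
    have hinner2 : γ' ≤ ⟪φ, graphNormal d dG⟫ := by
      have h := A.linearIsometryEquiv.inner_map_map φ (graphNormal d dG)
      rw [hψyφ] at h
      rw [← h]
      exact hinner
    exact memK hγ'0 φ hdGn hinner2
  -- properties of K'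
  have hK'sub : K' ⊆ closedBall 0 Λ := fun s hs => mem_closedBall_zero_iff.mpr hs.1
  have hK'closed : IsClosed K' := by
    have h1 : IsClosed {s : EuclideanSpace ℝ (Fin d) | ‖s‖ ≤ Λ} :=
      isClosed_le continuous_norm continuous_const
    have h2 : IsClosed {s : EuclideanSpace ℝ (Fin d) |
        ⟪horizPart d φ, s⟫ + γ' * Real.sqrt (1 + ‖s‖^2) ≤ φ (Fin.last d)} := by
      apply isClosed_le _ continuous_const
      apply Continuous.add
      · exact Continuous.inner continuous_const continuous_id
      · exact continuous_const.mul
          (Real.continuous_sqrt.comp (continuous_const.add (continuous_norm.pow 2)))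
    exact h1.inter h2
  have hK'cpt : IsCompact K' :=
    (isCompact_closedBall (0 : EuclideanSpace ℝ (Fin d)) Λ).of_isClosed_subset
      hK'closed hK'sub
  have hVE : (V \ E).Nonempty := by
    by_contra hcon
    rw [Set.not_nonempty_iff_eq_empty] at hcon
    have hsub : V ⊆ E := by
      intro v hv
      by_contra hvE
      exact Set.eq_empty_iff_forall_notMem.mp hcon v ⟨hv, hvE⟩
    exact (measure_ball_pos volume (0 : EuclideanSpace ℝ (Fin d))
      (by positivity : (0:ℝ) < 4*r)).ne' (measure_mono_null hsub hE)
  have hK'ne : K'.Nonempty := by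
    obtain ⟨w', hw'⟩ := hVE
    obtain ⟨dG, _, hgv⟩ := hKmem w' hw'
    exact ⟨gradVec dG, hgv⟩
  have hK'conv : Convex ℝ K' := by
    intro s hs t ht α β hα hβ hαβ
    constructor
    · calc ‖α•s+β•t‖ ≤ ‖α•s‖+‖β•t‖ := norm_add_le _ _
        _ = α*‖s‖+β*‖t‖ := by
            rw [norm_smul, norm_smul, Real.norm_eq_abs, Real.norm_eq_abs,
              abs_of_nonneg hα, abs_of_nonneg hβ]
        _ ≤ α*Λ+β*Λ := add_le_add (mul_le_mul_of_nonneg_left hs.1 hα)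
            (mul_le_mul_of_nonneg_left ht.1 hβ)
        _ = Λ := by rw [← add_mul, hαβ, one_mul]
    · have hin : ⟪horizPart d φ, α•s+β•t⟫
          = α*⟪horizPart d φ, s⟫ + β*⟪horizPart d φ, t⟫ := by
        rw [inner_add_right, real_inner_smul_right, real_inner_smul_right]
      have hwh : withHeight d (α•s+β•t) 1
          = α • withHeight d s 1 + β • withHeight d t 1 := by
        rw [wh_smul, wh_smul, wh_add, mul_one, mul_one, hαβ]
      have hsqrt : Real.sqrt (1 + ‖α•s+β•t‖^2)
          ≤ α * Real.sqrt (1+‖s‖^2) + β * Real.sqrt (1+‖t‖^2) := by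
        have h1 : Real.sqrt (1 + ‖α•s+β•t‖^2) = ‖withHeight d (α•s+β•t) 1‖ := by
          rw [wh_norm, one_pow, add_comm]
        have h2 : ‖withHeight d s 1‖ = Real.sqrt (1+‖s‖^2) := by
          rw [wh_norm, one_pow, add_comm]
        have h3 : ‖withHeight d t 1‖ = Real.sqrt (1+‖t‖^2) := by
          rw [wh_norm, one_pow, add_comm]
        rw [h1, hwh, ← h2, ← h3]
        calc ‖α • withHeight d s 1 + β • withHeight d t 1‖
            ≤ ‖α • withHeight d s 1‖ + ‖β • withHeight d t 1‖ := norm_add_le _ _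
          _ = α * ‖withHeight d s 1‖ + β * ‖withHeight d t 1‖ := by
              rw [norm_smul, norm_smul, Real.norm_eq_abs, Real.norm_eq_abs,
                abs_of_nonneg hα, abs_of_nonneg hβ]
      have h3 := hs.2
      have h4 := ht.2
      have hq : α*(φ (Fin.last d)) + β*(φ (Fin.last d)) = φ (Fin.last d) := by
        rw [← add_mul, hαβ, one_mul]
      show ⟪horizPart d φ, α•s+β•t⟫ + γ' * Real.sqrt (1 + ‖α•s+β•t‖^2) ≤ φ (Fin.last d)
      rw [hin]
      nlinarith [mul_le_mul_of_nonneg_left h3 hα, mul_le_mul_of_nonneg_left h4 hβ,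
        mul_le_mul_of_nonneg_left hsqrt hγ'0.le, hq]
  -- extremizers of s ↦ ⟪s, wx - wy⟫ on K'
  have hcontu : Continuous fun s : EuclideanSpace ℝ (Fin d) => ⟪s, wx - wy⟫ :=
    Continuous.inner continuous_id continuous_const
  obtain ⟨s₁, hs₁K, hs₁max⟩ := hK'cpt.exists_isMaxOn hK'ne hcontu.continuousOn
  obtain ⟨s₂, hs₂K, hs₂min⟩ := hK'cpt.exists_isMinOn hK'ne hcontu.continuousOn
  have hnu : ‖wx - wy‖ < 2*r := by
    calc ‖wx - wy‖ ≤ ‖wx‖ + ‖wy‖ := norm_sub_le _ _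
      _ < 2*r := by linarith
  have hgood : ∀ w ∈ V \ E, ∃ dG : EuclideanSpace ℝ (Fin d) →L[ℝ] ℝ,
      HasFDerivAt G dG w ∧ dG (wx - wy) ≤ ⟪s₁, wx - wy⟫ := by
    intro w hw
    obtain ⟨dG, hdG, hgv⟩ := hKmem w hw
    exact ⟨dG, hdG, by rw [gradVec_spec]; exact hs₁max hgv⟩
  have hgood' : ∀ w ∈ V \ E, ∃ dG : EuclideanSpace ℝ (Fin d) →L[ℝ] ℝ,
      HasFDerivAt G dG w ∧ dG (wy - wx) ≤ -⟪s₂, wx - wy⟫ := by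
    intro w hw
    obtain ⟨dG, hdG, hgv⟩ := hKmem w hw
    refine ⟨dG, hdG, ?_⟩
    have h1 : wy - wx = -(wx - wy) := by abel
    rw [h1, map_neg, gradVec_spec]
    have h2 : ⟪s₂, wx - wy⟫ ≤ ⟪gradVec dG, wx - wy⟫ := hs₂min hgv
    linarith
  have hsegxy : ∀ t ∈ Set.Icc (0:ℝ) 1, ∀ h : EuclideanSpace ℝ (Fin d), ‖h‖ < r →
      (wy + h) + t • (wx - wy) ∈ V := by
    intro t ht h hh
    rw [hVdef, mem_ball_zero_iff]
    have h1 : ‖t • (wx - wy)‖ ≤ ‖wx - wy‖ := by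
      rw [norm_smul, Real.norm_eq_abs, abs_of_nonneg ht.1]
      exact mul_le_of_le_one_left (norm_nonneg _) ht.2
    calc ‖(wy + h) + t • (wx - wy)‖ ≤ ‖wy + h‖ + ‖t • (wx - wy)‖ := norm_add_le _ _
      _ ≤ ‖wy‖ + ‖h‖ + ‖t • (wx - wy)‖ := by linarith [norm_add_le wy h]
      _ < 4*r := by linarith
  have hsegyx : ∀ t ∈ Set.Icc (0:ℝ) 1, ∀ h : EuclideanSpace ℝ (Fin d), ‖h‖ < r →
      (wx + h) + t • (wy - wx) ∈ V := by
    intro t ht h hh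
    rw [hVdef, mem_ball_zero_iff]
    have h0 : ‖wy - wx‖ = ‖wx - wy‖ := by rw [norm_sub_rev]
    have h1 : ‖t • (wy - wx)‖ ≤ ‖wx - wy‖ := by
      rw [norm_smul, Real.norm_eq_abs, abs_of_nonneg ht.1, h0]
      exact mul_le_of_le_one_left (norm_nonneg _) ht.2
    calc ‖(wx + h) + t • (wy - wx)‖ ≤ ‖wx + h‖ + ‖t • (wy - wx)‖ := norm_add_le _ _
      _ ≤ ‖wx‖ + ‖h‖ + ‖t • (wy - wx)‖ := by linarith [norm_add_le wx h]
      _ < 4*r := by linarith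
  have hup : G wx - G wy ≤ ⟪s₁, wx - wy⟫ := lemC hGlip hE hr0 hsegxy hgood
  have hdown : G wy - G wx ≤ -⟪s₂, wx - wy⟫ := lemC hGlip hE hr0 hsegyx hgood'
  have hIcc : G wx - G wy ∈ Set.Icc ⟪s₂, wx - wy⟫ ⟪s₁, wx - wy⟫ :=
    ⟨by linarith, hup⟩
  have himg : IsPreconnected ((fun s => ⟪s, wx - wy⟫) '' K') :=
    (hK'conv.isPreconnected).image _ hcontu.continuousOn
  obtain ⟨s₀, hs₀K, hs₀eq⟩ := himg.Icc_subset
    (Set.mem_image_of_mem _ hs₂K) (Set.mem_image_of_mem _ hs₁K) hIcc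
  -- transfer to the chart
  have hζxy : A.linearIsometryEquiv (withHeight d (wx - wy) (G wx - G wy)) = x - y := by
    have h1 := A.map_vsub (withHeight d wx (G wx)) (withHeight d wy (G wy))
    rw [hxA, hyA] at h1
    rw [← wh_sub]
    exact h1
  have hnorm_xy : ‖x - y‖ = ‖withHeight d (wx - wy) (G wx - G wy)‖ := by
    rw [← hζxy, LinearIsometryEquiv.norm_map]
  have hinner_xy : ⟪ψ y, x - y⟫ = ⟪φ, withHeight d (wx - wy) (G wx - G wy)⟫ := by
    rw [← hζxy, ← hψyφ, LinearIsometryEquiv.inner_map_map]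
  have hsq₀ : 0 < Real.sqrt (1+‖s₀‖^2) := Real.sqrt_pos.mpr (by positivity)
  set ν₀ := (Real.sqrt (1+‖s₀‖^2))⁻¹ • withHeight d (-s₀) 1 with hν₀def
  have hν₀n : ‖ν₀‖ = 1 := by
    rw [hν₀def, norm_smul, Real.norm_eq_abs, abs_of_nonneg (by positivity), wh_norm,
      norm_neg, one_pow, add_comm (‖s₀‖^2) (1:ℝ)]
    exact inv_mul_cancel₀ hsq₀.ne'
  have hs₀eq' : ⟪s₀, wx - wy⟫ = G wx - G wy := hs₀eq
  have hζν₀ : ⟪withHeight d (wx - wy) (G wx - G wy), ν₀⟫ = 0 := by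
    rw [hν₀def, real_inner_smul_right, wh_inner, inner_neg_right, mul_one,
      real_inner_comm s₀ (wx - wy), hs₀eq']
    ring
  have hφν₀ : γ' ≤ ⟪φ, ν₀⟫ := by
    rw [hν₀def, real_inner_smul_right]
    have h1 : ⟪φ, withHeight d (-s₀) 1⟫ = φ (Fin.last d) - ⟪horizPart d φ, s₀⟫ := by
      conv_lhs => rw [← wh_eta φ]
      rw [wh_inner, inner_neg_right, mul_one]
      ring
    rw [h1, inv_mul_eq_div, le_div_iff₀ hsq₀]
    have h2 := hs₀K.2
    linarith
  have habs := finalAlg hγ'0 hγ'1 hφ1 hν₀n hζν₀ hφν₀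
  have habs2 : |⟪ψ y, x - y⟫| ≤ Real.sqrt (1 - γ'^2) * ‖x - y‖ := by
    rw [hinner_xy, hnorm_xy]
    exact habs
  exact finalAlg2 hγ'0 hγ'1 (hψ1 y hy) habs2

/-- if `Ω` is a bounded Lipschitz set and `ψ ∈ C_c^∞` has `|ψ| = 1`
on `∂Ω` and `ψ·ν ≥ γ > 0` wherever the outer normal exists, then there are
`ρ, c > 0` such that for `x, y ∈ ∂Ω` with `|x−y| < ρ` one has
`|x−y| ≤ c |(Id − ψ(y) ⊗ ψ(y))(x−y)|`. -/
theorem stmt12 (d : ℕ) (Ω : Set (EuclideanSpace ℝ (Fin (d+1))))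
    (hΩo : IsOpen Ω) (hΩb : Bornology.IsBounded Ω) (hΩl : IsLipschitzSet d Ω)
    (γ : ℝ) (hγ : 0 < γ)
    (ψ : EuclideanSpace ℝ (Fin (d+1)) → EuclideanSpace ℝ (Fin (d+1)))
    (hψs : ContDiff ℝ (⊤ : ℕ∞) ψ) (hψc : HasCompactSupport ψ)
    (hψ1 : ∀ x ∈ frontier Ω, ‖ψ x‖ = 1)
    (hψν : ∀ x ∈ frontier Ω, ∀ ε L A G, IsLipschitzChart d Ω x ε L A G →
      ∀ (w : EuclideanSpace ℝ (Fin d)) (dG : EuclideanSpace ℝ (Fin d) →L[ℝ] ℝ),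
        HasFDerivAt G dG w →
        ∀ y, y = A (withHeight d w (G w)) → y ∈ ball x ε →
          γ ≤ ⟪ψ y, A.linearIsometryEquiv (graphNormal d dG)⟫) :
    ∃ ρ : ℝ, 0 < ρ ∧ ∃ c : ℝ, 0 < c ∧
      ∀ x ∈ frontier Ω, ∀ y ∈ frontier Ω, dist x y < ρ →
        ‖x - y‖ ≤ c * ‖(x - y) - ⟪ψ y, x - y⟫ • ψ y‖ := by
  classical
  set γ' : ℝ := min γ 1 / 2 with hγ'def
  have hγ'0 : 0 < γ' := by
    have : 0 < min γ 1 := lt_min hγ one_pos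
    positivity
  have hγ'1 : γ' ≤ 1/2 := by
    have : min γ 1 ≤ 1 := min_le_right _ _
    rw [hγ'def]; linarith
  have h2γ' : 2*γ' ≤ γ := by
    have : min γ 1 ≤ γ := min_le_left _ _
    rw [hγ'def]; linarith
  have hψuc : UniformContinuous ψ :=
    hψc.uniformContinuous_of_continuous hψs.continuous
  obtain ⟨δψ, hδψ0, hδψ⟩ := Metric.uniformContinuous_iff.mp hψuc γ' hγ'0
  have hloc : ∀ x₀ ∈ frontier Ω, ∃ r : ℝ, 0 < r ∧
      ∀ x ∈ frontier Ω, ∀ y ∈ frontier Ω, x ∈ ball x₀ r → y ∈ ball x₀ r →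
      ‖x - y‖ ≤ (1/γ') * ‖(x - y) - ⟪ψ y, x - y⟫ • ψ y‖ := by
    intro x₀ hx₀
    obtain ⟨ε, L, A, G, hch⟩ := hΩl x₀ hx₀
    exact localLem hΩo hγ'0 hγ'1 hψ1 hδψ0 (fun a b hab => hδψ hab) hx₀ hch
      (fun w dG hdG y hyeq hyb =>
        le_trans h2γ' (hψν x₀ hx₀ ε L A G hch w dG hdG y hyeq hyb))
  choose! rad hrad0 hradP using hloc
  have hcpt : IsCompact (frontier Ω) := by
    apply Metric.isCompact_of_isClosed_isBounded isClosed_frontier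
    exact hΩb.closure.subset (frontier_subset_closure)
  have hcover : frontier Ω ⊆ ⋃ i : frontier Ω, ball (i : EuclideanSpace ℝ (Fin (d+1))) (rad i) := by
    intro z hz
    exact Set.mem_iUnion.mpr ⟨⟨z, hz⟩, mem_ball_self (hrad0 z hz)⟩
  obtain ⟨ρ, hρ0, hρ⟩ := lebesgue_number_lemma_of_metric hcpt
    (fun i : frontier Ω => isOpen_ball) hcover
  refine ⟨ρ, hρ0, 1/γ', by positivity, ?_⟩
  intro x hx y hy hxy
  obtain ⟨i, hi⟩ := hρ x hx
  exact hradP i i.2 x hx y hy (hi (mem_ball_self hρ0))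
    (hi (mem_ball.mpr (by rwa [dist_comm])))
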